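/- Let Λ be the upper triangular algebra (A, A/rad(A); 0, B) with B = T(A/rad(A)), and e' = diag(0,1). Then there is a short exact sequence of right Λ-modules 0 → (0, A/rad(A), 0) → e'Λ → (0, A/rad(A), 0) → 0, where (0, A/rad(A), 0) denotes the Λ-module supported at the B-component. In particular, the top of e'Λ has delooping level 0. -/

import Mathlib

open CategoryTheory MulOpposite

universe u

/-- `f : P →ₗ[R] X` is a projective cover: `P` is projective, `f` is surjective, and the
kernel of `f` is superfluous in `P`. -/
def IsProjCover (R : Type u) [Ring R] {P X : Type u} [AddCommGroup P] [Module R P]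
    [AddCommGroup X] [Module R X] (f : P →ₗ[R] X) : Prop :=
  Module.Projective R P ∧ Function.Surjective f ∧
    ∀ N : Submodule R P, N ⊔ LinearMap.ker f = ⊤ → N = ⊤

/-- `IsSyzygy R n X K` means that `K` is an `n`-th syzygy `Ω^n(X)` of `X`, obtained by
iteratively taking kernels of projective covers. -/
inductive IsSyzygy (R : Type u) [Ring R] : ℕ → ModuleCat.{u} R → ModuleCat.{u} R → Prop
  | zero (X : ModuleCat.{u} R) : IsSyzygy R 0 X X
  | succ {n : ℕ} {X K P : ModuleCat.{u} R} (f : P ⟶ X) (hf : IsProjCover R f.hom)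
      (h : IsSyzygy R n (ModuleCat.of R (LinearMap.ker f.hom)) K) : IsSyzygy R (n + 1) X K

/-- `X` is a direct summand of `Y`. -/
def IsDirectSummandOf (R : Type u) [Ring R] (X Y : Type u) [AddCommGroup X] [Module R X]
    [AddCommGroup Y] [Module R Y] : Prop :=
  ∃ (i : X →ₗ[R] Y) (r : Y →ₗ[R] X), r ∘ₗ i = LinearMap.id

/-- The delooping level of a module `X`: the least `d` such that `Ω^d(X)` is a direct
summand of `P ⊕ Ω^{d+1}(M)` for some finitely generated projective module `P` and some
finitely generated module `M`; it is `⊤` (i.e. `∞`) if no such `d` exists. -/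
noncomputable def delLevel (R : Type u) [Ring R] (X : ModuleCat.{u} R) : ℕ∞ :=
  sInf {e : ℕ∞ | ∃ d : ℕ, e = (d : ℕ∞) ∧
    ∃ M P S T : ModuleCat.{u} R, Module.Finite R M ∧ Module.Projective R P ∧
      Module.Finite R P ∧ IsSyzygy R d X S ∧ IsSyzygy R (d + 1) M T ∧
      IsDirectSummandOf R S (P × T)}

/-- The delooping level of a ring `R`, computed with left `R`-modules: the supremum
(= maximum, for an Artin algebra) of the delooping levels of the simple modules. -/
noncomputable def delAlg (R : Type u) [Ring R] : ℕ∞ :=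
  ⨆ (S : ModuleCat.{u} R) (_ : IsSimpleModule R S), delLevel R S

/-- The delooping level of a ring `R` computed with right `R`-modules
(= left `Rᵐᵒᵖ`-modules), as in the paper. -/
noncomputable def delAlgRight (R : Type u) [Ring R] : ℕ∞ := delAlg Rᵐᵒᵖ

/-- A ring is an Artin algebra if it is a module-finite algebra over some commutative
artinian ring. -/
def IsArtinAlgebra (A : Type u) [Ring A] : Prop :=
  ∃ (k : Type u) (_ : CommRing k) (_ : IsArtinianRing k) (_ : Algebra k A),
    Module.Finite k A

/-- The radical of a module: the intersection of its maximal submodules. -/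
def modRad (R : Type u) [Ring R] (N : Type u) [AddCommGroup N] [Module R N] :
    Submodule R N := sInf {P : Submodule R N | IsCoatom P}

/-- `Z` belongs to `add N`: `Z` is a direct summand of a finite direct sum of copies
of `N`. -/
def InAdd (R : Type u) [Ring R] (N Z : Type u) [AddCommGroup N] [Module R N]
    [AddCommGroup Z] [Module R Z] : Prop :=
  ∃ n : ℕ, IsDirectSummandOf R Z (Fin n → N)

section Constructions

/-- The Jacobson radical of `A` as a two-sided ideal. -/
noncomputable def radT (A : Type u) [Ring A] : TwoSidedIdeal A :=
  (⊥ : TwoSidedIdeal A).jacobson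

/-- The semisimple quotient `A/rad(A)`. -/
def Sq (A : Type u) [Ring A] : Type u := (radT A).ringCon.Quotient

noncomputable instance (A : Type u) [Ring A] : Ring (Sq A) :=
  inferInstanceAs (Ring (radT A).ringCon.Quotient)

/-- The natural projection `A → A/rad(A)`. -/
noncomputable def sqMk (A : Type u) [Ring A] : A →+* Sq A := RingCon.mk' _

/-- `B = T(A/rad(A))`, the trivial extension of the semisimple quotient of `A`. -/
def BB (A : Type u) [Ring A] : Type u := TrivSqZeroExt (Sq A) (Sq A)

noncomputable instance (A : Type u) [Ring A] : Ring (BB A) :=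
  inferInstanceAs (Ring (TrivSqZeroExt (Sq A) (Sq A)))

/-- The projection `B = T(A/rad(A)) → A/rad(A)`, a ring homomorphism. -/
noncomputable def bbFst (A : Type u) [Ring A] : BB A →+* Sq A where
  toFun := TrivSqZeroExt.fst
  map_one' := TrivSqZeroExt.fst_one (R := Sq A) (M := Sq A)
  map_mul' x y := TrivSqZeroExt.fst_mul x y
  map_zero' := TrivSqZeroExt.fst_zero (R := Sq A) (M := Sq A)
  map_add' x y := TrivSqZeroExt.fst_add x y

/-! ### The `A`-`B`-bimodule `M = A/rad(A)` and the upper triangular algebra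
`Λ = (A, A/rad(A); 0, B)` -/

/-- `M = A/rad(A)` viewed as an `A`-`B`-bimodule (left action of `A` via `A → A/rad(A)`,
right action of `B` via `B → A/rad(A)`). -/
def MM (A : Type u) [Ring A] : Type u := Sq A

noncomputable instance (A : Type u) [Ring A] : AddCommGroup (MM A) :=
  inferInstanceAs (AddCommGroup (Sq A))

/-- Left action of `A × B` on `M` through the `A`-component. -/
noncomputable instance (A : Type u) [Ring A] : Module (A × BB A) (MM A) :=
  Module.compHom (Sq A) ((sqMk A).comp (RingHom.fst A (BB A)))

/-- Right action of `A × B` on `M` through the `B`-component. -/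
noncomputable instance (A : Type u) [Ring A] : Module (A × BB A)ᵐᵒᵖ (MM A) :=
  Module.compHom (Sq A) (RingHom.op ((bbFst A).comp (RingHom.snd A (BB A))))

noncomputable instance (A : Type u) [Ring A] :
    SMulCommClass (A × BB A) (A × BB A)ᵐᵒᵖ (MM A) :=
  ⟨fun c c' m => by
    show sqMk A c.1 * ((show Sq A from m) * bbFst A (unop c').2) =
      (sqMk A c.1 * (show Sq A from m)) * bbFst A (unop c').2
    exact (mul_assoc _ _ _).symm⟩

/-- The upper triangular matrix algebra `Λ = (A, A/rad(A); 0, B)`, realized as the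
trivial square-zero extension of `A × B` by the bimodule `M = A/rad(A)`. -/
def Lam (A : Type u) [Ring A] : Type u := TrivSqZeroExt (A × BB A) (MM A)

noncomputable instance (A : Type u) [Ring A] : Ring (Lam A) :=
  inferInstanceAs (Ring (TrivSqZeroExt (A × BB A) (MM A)))

/-! ### The `B`-`A`-bimodule `M' = A/rad(A)` and the cover
`Ã = (A, 0; A/rad(A), B)` -/

/-- `M' = A/rad(A)` viewed as a `B`-`A`-bimodule. -/
def MC (A : Type u) [Ring A] : Type u := Sq A

noncomputable instance (A : Type u) [Ring A] : AddCommGroup (MC A) :=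
  inferInstanceAs (AddCommGroup (Sq A))

/-- Left action of `A × B` on `M'` through the `B`-component. -/
noncomputable instance (A : Type u) [Ring A] : Module (A × BB A) (MC A) :=
  Module.compHom (Sq A) ((bbFst A).comp (RingHom.snd A (BB A)))

/-- Right action of `A × B` on `M'` through the `A`-component. -/
noncomputable instance (A : Type u) [Ring A] : Module (A × BB A)ᵐᵒᵖ (MC A) :=
  Module.compHom (Sq A) (RingHom.op ((sqMk A).comp (RingHom.fst A (BB A))))

noncomputable instance (A : Type u) [Ring A] :
    SMulCommClass (A × BB A) (A × BB A)ᵐᵒᵖ (MC A) :=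
  ⟨fun c c' m => by
    show bbFst A c.2 * ((show Sq A from m) * sqMk A (unop c').1) =
      (bbFst A c.2 * (show Sq A from m)) * sqMk A (unop c').1
    exact (mul_assoc _ _ _).symm⟩

/-- The cover `Ã = (A, 0; A/rad(A), B)` of `A`: the lower triangular matrix algebra,
realized as the trivial square-zero extension of `A × B` by the `B`-`A`-bimodule
`M' = A/rad(A)`. -/
def Cov (A : Type u) [Ring A] : Type u := TrivSqZeroExt (A × BB A) (MC A)

noncomputable instance (A : Type u) [Ring A] : Ring (Cov A) :=
  inferInstanceAs (Ring (TrivSqZeroExt (A × BB A) (MC A)))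

/-- The projection `Λ → A × B`. -/
noncomputable def lamFst (A : Type u) [Ring A] : Lam A →+* A × BB A where
  toFun := TrivSqZeroExt.fst
  map_one' := TrivSqZeroExt.fst_one (R := A × BB A) (M := MM A)
  map_mul' x y := TrivSqZeroExt.fst_mul x y
  map_zero' := TrivSqZeroExt.fst_zero (R := A × BB A) (M := MM A)
  map_add' x y := TrivSqZeroExt.fst_add x y

end Constructions

section S6
variable (A : Type u) [Ring A]

/-- The projection `Λ → B`. -/
noncomputable def lamToB : Lam A →+* BB A := (RingHom.snd A (BB A)).comp (lamFst A)

/-- The right `Λ`-module `(0, A/rad(A), 0)`: the module `A/rad(A)`, with `Λ` acting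
through `Λ → B → A/rad(A)`. -/
def NSq : Type u := Sq A

noncomputable instance : AddCommGroup (NSq A) := inferInstanceAs (AddCommGroup (Sq A))

noncomputable instance : Module (Lam A)ᵐᵒᵖ (NSq A) :=
  Module.compHom (Sq A) (RingHom.op ((bbFst A).comp (lamToB A)))

/-- The idempotent `e' = diag(0,1)` of `Λ`. -/
noncomputable def lamE' : Lam A := TrivSqZeroExt.inl ((0 : A), (1 : BB A))

/-- The right ideal `e'Λ`, as a right submodule of `Λ`. -/
noncomputable def lamE'Ideal : Submodule (Lam A)ᵐᵒᵖ (Lam A) :=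
  Submodule.span (Lam A)ᵐᵒᵖ {lamE' A}

/-- The radical `(e'Λ)·rad(Λ)` of the right `Λ`-module `e'Λ`. -/
noncomputable def lamE'Rad : Submodule (Lam A)ᵐᵒᵖ (lamE'Ideal A) :=
  Submodule.span (Lam A)ᵐᵒᵖ
    {z : lamE'Ideal A | ∃ (v : lamE'Ideal A) (l : Lam A),
      l ∈ (⊥ : TwoSidedIdeal (Lam A)).jacobson ∧ z = op l • v}

end S6

/-! The right ideal `e'Λ` is the corner `{diag(0, b)}`, i.e. `B = T(A/rad A)` with `Λ` acting
through `Λ → B`. The square-zero ideal `0 ⋉ A/rad A` of `B` consists of elements `x` with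
`xΛx = 0`, so it lies in `rad Λ`, while `rad Λ` maps into `rad (A/rad A) = 0`; hence the
radical of `e'Λ` is exactly the kernel of `e'Λ → A/rad A`, and it is again `A/rad A`. As
`(1 - x)(1 + x) = 1` for `x` in that ideal, the kernel is superfluous, so `e'Λ` is a
projective cover of its top `A/rad A` with first syzygy `A/rad A`: the top is a direct summand
of its own first syzygy, i.e. has delooping level `0`. -/

open TrivSqZeroExt

theorem TwoSidedIdeal.mem_jacobson_bot {R : Type*} [Ring R] {x : R} :
    x ∈ (⊥ : TwoSidedIdeal R).jacobson ↔ x ∈ Ring.jacobson R := by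
  rw [← TwoSidedIdeal.mem_asIdeal, TwoSidedIdeal.asIdeal_jacobson, ← Ideal.jacobson_bot]
  rfl

theorem TwoSidedIdeal.mem_jacobson_bot_of_mul_mul_eq_zero {R : Type*} [Ring R] {x : R}
    (h : ∀ y, x * y * x = 0) : x ∈ (⊥ : TwoSidedIdeal R).jacobson := by
  refine TwoSidedIdeal.mem_jacobson_iff.mpr fun y => ⟨1 - y * x, ?_⟩
  rw [TwoSidedIdeal.mem_bot]
  calc (1 - y * x) * y * x + (1 - y * x) - 1 = -(y * (x * y * x)) := by noncomm_ring
    _ = 0 := by rw [h, mul_zero, neg_zero]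

theorem TwoSidedIdeal.map_mem_jacobson_bot {R S : Type*} [Ring R] [Ring S] (f : R →+* S)
    (hf : Function.Surjective f) {x : R} (hx : x ∈ (⊥ : TwoSidedIdeal R).jacobson) :
    f x ∈ (⊥ : TwoSidedIdeal S).jacobson := by
  have : RingHomSurjective f := ⟨hf⟩
  rw [TwoSidedIdeal.mem_jacobson_bot] at hx ⊢
  exact Ring.map_jacobson_le f ⟨x, hx, rfl⟩

theorem TrivSqZeroExt.inr_mul {R M : Type*} [Semiring R] [AddCommMonoid M] [Module R M]
    [Module Rᵐᵒᵖ M] (m : M) (x : TrivSqZeroExt R M) : inr m * x = inr (op x.fst • m) := by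
  ext <;> simp

theorem TrivSqZeroExt.mul_mul_self_of_fst_eq_zero {R M : Type*} [Ring R] [AddCommGroup M]
    [Module R M] [Module Rᵐᵒᵖ M] [SMulCommClass R Rᵐᵒᵖ M] {x : TrivSqZeroExt R M}
    (hx : x.fst = 0) (y : TrivSqZeroExt R M) : x * y * x = 0 := by
  ext <;> simp [hx]

theorem Submodule.span_singleton_mk_self_eq_top {R M : Type*} [Ring R] [AddCommGroup M]
    [Module R M] (x : M) :
    span R {(⟨x, mem_span_singleton_self x⟩ : span R {x})} = ⊤ := by
  refine (span_singleton_eq_top_iff _ _).mpr fun ⟨z, hz⟩ => ?_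
  obtain ⟨r, rfl⟩ := mem_span_singleton.mp hz
  exact ⟨r, rfl⟩

theorem Module.Projective.span_singleton_of_isIdempotentElem {R : Type*} [Ring R] {e : R}
    (he : IsIdempotentElem e) : Module.Projective Rᵐᵒᵖ (Submodule.span Rᵐᵒᵖ {e}) := by
  have : Module.Projective Rᵐᵒᵖ R := .of_equiv (MulOpposite.opLinearEquiv Rᵐᵒᵖ).symm
  refine .of_split (Submodule.subtype _) ((LinearMap.mulLeft Rᵐᵒᵖ e).codRestrict _
    fun l => Submodule.mem_span_singleton.mpr ⟨op l, rfl⟩) ?_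
  ext ⟨z, hz⟩
  obtain ⟨c, rfl⟩ := Submodule.mem_span_singleton.mp hz
  show e * (e * _) = e * _
  rw [← mul_assoc, he.eq]

theorem isProjCover_of_span_singleton_eq_top {R P X : Type u} [Ring R] [AddCommGroup P]
    [Module R P] [Module.Projective R P] [AddCommGroup X] [Module R X] (f : P →ₗ[R] X)
    (hf : Function.Surjective f) {g : P} (hg : Submodule.span R {g} = ⊤)
    (hker : ∀ k ∈ LinearMap.ker f, ∃ r : R, r • (g - k) = g) : IsProjCover R f := by
  refine ⟨inferInstance, hf, fun N hN => ?_⟩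
  obtain ⟨n, hn, k, hk, hnk⟩ := Submodule.mem_sup.mp (hN ▸ Submodule.mem_top : g ∈ N ⊔ _)
  obtain ⟨r, hr⟩ := hker k hk
  rw [eq_top_iff, ← hg, Submodule.span_le, Set.singleton_subset_iff, ← hr, ← hnk,
    add_sub_cancel_right]
  exact N.smul_mem r hn

theorem isDirectSummandOf_prod_of_linearEquiv {R : Type u} [Ring R] {X Y : Type u}
    [AddCommGroup X] [Module R X] [AddCommGroup Y] [Module R Y] (P : Type u) [AddCommGroup P]
    [Module R P] (e : X ≃ₗ[R] Y) : IsDirectSummandOf R X (P × Y) :=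
  ⟨LinearMap.inr R P Y ∘ₗ e.toLinearMap, e.symm.toLinearMap ∘ₗ LinearMap.snd R P Y, by
    ext x; simp⟩

theorem delLevel_eq_zero_of_isSyzygy_one {R : Type u} [Ring R] {X K : ModuleCat.{u} R}
    [Module.Finite R X] (hK : IsSyzygy R 1 X K) (e : X ≃ₗ[R] K) : delLevel R X = 0 :=
  le_antisymm (sInf_le ⟨0, rfl, X, ModuleCat.of R PUnit, X, K, inferInstance,
    inferInstance, inferInstance, .zero X, hK, isDirectSummandOf_prod_of_linearEquiv _ e⟩) bot_le

section Triangular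

variable (A : Type u) [Ring A]

theorem sqMk_surjective : Function.Surjective (sqMk A) :=
  RingCon.mk'_surjective _

theorem ker_sqMk : RingHom.ker (sqMk A) = Ring.jacobson A := by
  ext a
  rw [RingHom.mem_ker, ← TwoSidedIdeal.mem_jacobson_bot]
  exact (RingCon.eq _).trans (by rw [TwoSidedIdeal.rel_iff, sub_zero]; rfl)

theorem ringJacobson_sq_eq_bot : Ring.jacobson (Sq A) = ⊥ := by
  have : RingHomSurjective (sqMk A) := ⟨sqMk_surjective A⟩
  rw [← Ring.map_jacobson_of_ker_le (ker_sqMk A).le, ← ker_sqMk, eq_bot_iff]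
  rintro _ ⟨a, ha, rfl⟩
  exact ha

noncomputable def bbInr : Sq A →+ BB A := (inrHom (Sq A) (Sq A)).toAddMonoidHom

noncomputable def lamOfB : BB A →+ Lam A :=
  (inlHom (A × BB A) (MM A)).toAddMonoidHom.comp (AddMonoidHom.inr A (BB A))

noncomputable def lamToSq : Lam A →+* Sq A := (bbFst A).comp (lamToB A)

variable {A}

theorem bbInr_mul (s : Sq A) (b : BB A) : bbInr A s * b = bbInr A (s * bbFst A b) :=
  TrivSqZeroExt.inr_mul s b

theorem eq_bbInr_of_bbFst_eq_zero {b : BB A} (hb : bbFst A b = 0) : b = bbInr A b.snd :=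
  TrivSqZeroExt.ext hb rfl

theorem one_sub_mul_one_add_of_bbFst_eq_zero {b : BB A} (hb : bbFst A b = 0) :
    (1 - b) * (1 + b) = 1 := by
  have hbb : b * 1 * b = 0 := TrivSqZeroExt.mul_mul_self_of_fst_eq_zero hb 1
  calc (1 - b) * (1 + b) = 1 - b * 1 * b := by noncomm_ring
    _ = 1 := by rw [hbb, sub_zero]

theorem lamToB_lamOfB (b : BB A) : lamToB A (lamOfB A b) = b := rfl

theorem lamOfB_injective : Function.Injective (lamOfB A) :=
  Function.LeftInverse.injective (g := lamToB A) lamToB_lamOfB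

theorem lamOfB_mul (b : BB A) (l : Lam A) : lamOfB A b * l = lamOfB A (b * lamToB A l) := by
  refine TrivSqZeroExt.ext (Prod.ext (zero_mul _) rfl) ?_
  show ((0 : A), b) • l.snd + op l.fst • (0 : MM A) = 0
  rw [smul_zero, add_zero]
  exact zero_mul (show Sq A from l.snd)

theorem lamE'_eq : lamE' A = lamOfB A 1 := rfl

theorem lamE'_mul (l : Lam A) : lamE' A * l = lamOfB A (lamToB A l) := by
  rw [lamE'_eq, lamOfB_mul, one_mul]

theorem isIdempotentElem_lamE' : IsIdempotentElem (lamE' A) := by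
  rw [IsIdempotentElem, lamE'_mul, lamE'_eq, lamToB_lamOfB]

theorem mem_lamE'Ideal_iff {z : Lam A} : z ∈ lamE'Ideal A ↔ ∃ b, lamOfB A b = z := by
  refine Submodule.mem_span_singleton.trans ⟨?_, ?_⟩
  · rintro ⟨c, rfl⟩
    exact ⟨_, (lamE'_mul _).symm⟩
  · rintro ⟨b, rfl⟩
    exact ⟨op (lamOfB A b), lamE'_mul _⟩

theorem lamToSq_surjective : Function.Surjective (lamToSq A) :=
  fun s => ⟨lamOfB A (inl s), rfl⟩

theorem lamToSq_eq_zero_of_mem_jacobson {l : Lam A}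
    (hl : l ∈ (⊥ : TwoSidedIdeal (Lam A)).jacobson) : lamToSq A l = 0 := by
  have := TwoSidedIdeal.map_mem_jacobson_bot _ lamToSq_surjective hl
  rwa [TwoSidedIdeal.mem_jacobson_bot, ringJacobson_sq_eq_bot] at this

theorem lamOfB_mem_jacobson {b : BB A} (hb : bbFst A b = 0) :
    lamOfB A b ∈ (⊥ : TwoSidedIdeal (Lam A)).jacobson :=
  TwoSidedIdeal.mem_jacobson_bot_of_mul_mul_eq_zero fun y => by
    have hbyb : b * lamToB A y * b = 0 := TrivSqZeroExt.mul_mul_self_of_fst_eq_zero hb _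
    rw [lamOfB_mul, lamOfB_mul, lamToB_lamOfB, hbyb, map_zero]

variable (A)

noncomputable def lamE'Incl : NSq A →ₗ[(Lam A)ᵐᵒᵖ] lamE'Ideal A where
  toFun s := ⟨lamOfB A (bbInr A s), mem_lamE'Ideal_iff.mpr ⟨_, rfl⟩⟩
  map_add' s t := Subtype.ext (map_add ((lamOfB A).comp (bbInr A)) s t)
  map_smul' c (s : Sq A) := Subtype.ext <| by
    show lamOfB A (bbInr A (s * lamToSq A c.unop)) = lamOfB A (bbInr A s) * c.unop
    rw [lamOfB_mul, bbInr_mul]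
    rfl

noncomputable def lamE'Proj : lamE'Ideal A →ₗ[(Lam A)ᵐᵒᵖ] NSq A where
  toFun z := show Sq A from lamToSq A z
  map_add' z w := map_add (lamToSq A) (z : Lam A) w
  map_smul' c z := map_mul (lamToSq A) (z : Lam A) c.unop

variable {A}

theorem lamE'Incl_injective : Function.Injective (lamE'Incl A) := fun _ _ h =>
  TrivSqZeroExt.inr_injective (lamOfB_injective (congrArg Subtype.val h))

theorem lamE'Proj_surjective : Function.Surjective (lamE'Proj A) := fun s =>
  ⟨⟨lamOfB A (inl s), mem_lamE'Ideal_iff.mpr ⟨_, rfl⟩⟩, rfl⟩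

theorem mem_ker_lamE'Proj {z : lamE'Ideal A} :
    z ∈ LinearMap.ker (lamE'Proj A) ↔ ∃ b, bbFst A b = 0 ∧ lamOfB A b = z := by
  refine ⟨fun hz => ?_, fun ⟨b, hb, hz⟩ => ?_⟩
  · obtain ⟨b, hb⟩ := mem_lamE'Ideal_iff.mp z.2
    have h : lamToSq A z = 0 := hz
    exact ⟨b, by rwa [← hb] at h, hb⟩
  · show lamToSq A z = 0
    rw [← hz]
    exact hb

theorem range_lamE'Incl : LinearMap.range (lamE'Incl A) = LinearMap.ker (lamE'Proj A) := by
  ext z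
  rw [LinearMap.mem_range, mem_ker_lamE'Proj]
  constructor
  · rintro ⟨s, rfl⟩
    exact ⟨bbInr A s, rfl, rfl⟩
  · rintro ⟨b, hb, hz⟩
    refine ⟨b.snd, Subtype.ext ?_⟩
    rw [← hz]
    exact congrArg (lamOfB A) (eq_bbInr_of_bbFst_eq_zero hb).symm

theorem lamE'Rad_eq_ker : lamE'Rad A = LinearMap.ker (lamE'Proj A) := by
  refine le_antisymm (Submodule.span_le.mpr ?_) fun z hz => ?_
  · rintro _ ⟨v, l, hl, rfl⟩
    show lamToSq A v * lamToSq A l = 0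
    rw [lamToSq_eq_zero_of_mem_jacobson hl, mul_zero]
  · obtain ⟨b, hb, hz⟩ := mem_ker_lamE'Proj.mp hz
    refine Submodule.subset_span ⟨⟨lamE' A, Submodule.mem_span_singleton_self _⟩, lamOfB A b,
      lamOfB_mem_jacobson hb, Subtype.ext ?_⟩
    show (z : Lam A) = lamE' A * lamOfB A b
    rw [lamE'_mul, lamToB_lamOfB, hz]

theorem isProjCover_lamE'Rad_mkQ : IsProjCover (Lam A)ᵐᵒᵖ (lamE'Rad A).mkQ := by
  have : Module.Projective (Lam A)ᵐᵒᵖ (lamE'Ideal A) :=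
    .span_singleton_of_isIdempotentElem isIdempotentElem_lamE'
  refine isProjCover_of_span_singleton_eq_top _ (Submodule.mkQ_surjective _)
    (Submodule.span_singleton_mk_self_eq_top (lamE' A)) fun k hk => ?_
  rw [Submodule.ker_mkQ, lamE'Rad_eq_ker] at hk
  obtain ⟨b, hb, hbk⟩ := mem_ker_lamE'Proj.mp hk
  refine ⟨op (lamOfB A (1 + b)), Subtype.ext ?_⟩
  show (lamE' A - k) * lamOfB A (1 + b) = lamE' A
  rw [← hbk, lamE'_eq, ← map_sub, lamOfB_mul, lamToB_lamOfB,
    one_sub_mul_one_add_of_bbFst_eq_zero hb]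

variable (A)

noncomputable def lamE'TopEquiv : (lamE'Ideal A ⧸ lamE'Rad A) ≃ₗ[(Lam A)ᵐᵒᵖ] NSq A :=
  (Submodule.quotEquivOfEq _ _ lamE'Rad_eq_ker).trans
    ((lamE'Proj A).quotKerEquivOfSurjective lamE'Proj_surjective)

noncomputable def lamE'RadEquiv : NSq A ≃ₗ[(Lam A)ᵐᵒᵖ] LinearMap.ker (lamE'Rad A).mkQ :=
  (LinearEquiv.ofInjective _ lamE'Incl_injective).trans (LinearEquiv.ofEq _ _ (by
    rw [Submodule.ker_mkQ, lamE'Rad_eq_ker, range_lamE'Incl]))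

end Triangular

theorem stmt_6_general (A : Type u) [Ring A] :
    (∃ (ι : NSq A →ₗ[(Lam A)ᵐᵒᵖ] lamE'Ideal A)
       (p : lamE'Ideal A →ₗ[(Lam A)ᵐᵒᵖ] NSq A),
        Function.Injective ι ∧ Function.Surjective p ∧
          LinearMap.range ι = LinearMap.ker p) ∧
    delLevel (Lam A)ᵐᵒᵖ
      (ModuleCat.of (Lam A)ᵐᵒᵖ (lamE'Ideal A ⧸ lamE'Rad A)) = 0 := by
  refine ⟨⟨lamE'Incl A, lamE'Proj A, lamE'Incl_injective, lamE'Proj_surjective,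
    range_lamE'Incl⟩, ?_⟩
  have : Module.Finite (Lam A)ᵐᵒᵖ (lamE'Ideal A) := Module.Finite.span_singleton _ _
  exact delLevel_eq_zero_of_isSyzygy_one
    (.succ (ModuleCat.ofHom (lamE'Rad A).mkQ) isProjCover_lamE'Rad_mkQ (.zero _))
    ((lamE'TopEquiv A).trans (lamE'RadEquiv A))

/-- Let `Λ` be the upper triangular algebra `(A, A/rad(A); 0, B)` with
`B = T(A/rad(A))`, and `e' = diag(0,1)`.  There is a short exact sequence of right
`Λ`-modules `0 → (0, A/rad(A), 0) → e'Λ → (0, A/rad(A), 0) → 0`.  In particular the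
top `e'Λ / (e'Λ)rad(Λ)` of `e'Λ` has delooping level `0`. -/
theorem stmt_6 (k : Type u) [CommRing k] [IsArtinianRing k]
    (A : Type u) [Ring A] [Algebra k A] [Module.Finite k A] :
    (∃ (ι : NSq A →ₗ[(Lam A)ᵐᵒᵖ] lamE'Ideal A)
       (p : lamE'Ideal A →ₗ[(Lam A)ᵐᵒᵖ] NSq A),
        Function.Injective ι ∧ Function.Surjective p ∧
          LinearMap.range ι = LinearMap.ker p) ∧
    delLevel (Lam A)ᵐᵒᵖ
      (ModuleCat.of (Lam A)ᵐᵒᵖ (lamE'Ideal A ⧸ lamE'Rad A)) = 0 :=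
  stmt_6_general A
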